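/- arXiv:2003.06242 — 5 statements merged into one kernel-verified Lean document; each statement's English description precedes it below -/
import Mathlib

section
/- For every real K, every real N > 1, every t ∈ [0,1] and every θ > 0 satisfying θ·√(max(K,0)/(N−1)) < π, the modified distortion coefficient dominates the reduced one: t^{1/N} · ( sin_{K/(N−1)}(tθ) / sin_{K/(N−1)}(θ) )^{1−1/N} ≥ sin_{K/N}(tθ) / sin_{K/N}(θ). -/
/-!
Since `K / N = (1 / N) * 0 + (1 - 1 / N) * (K / (N - 1))` and the coefficient at curvature `0`
is `t`, the inequality says that `κ ↦ sin_κ(tθ) / sin_κ(θ)` is log-convex along the segment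
from `0` to `K / (N - 1)`. By Euler's product `sin_κ x = x ∏ⱼ (1 - κ x² / (j² π²))` this ratio is
`t` times a product of factors `(1 - κ t² y) / (1 - κ y)` with `κ y < 1`, and for each factor the
required inequality is a consequence of the weighted AM-GM inequality.
-/

open Real

/-- The generalized sine function `sin_κ`. -/
noncomputable def sinK (κ x : ℝ) : ℝ :=
  if κ < 0 then Real.sinh (Real.sqrt (-κ) * x) / Real.sqrt (-κ)
  else if κ = 0 then x
  else Real.sin (Real.sqrt κ * x) / Real.sqrt κ

open Filter Topology Set

/-- The partial products of Euler's product for `sinK κ x`. -/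
noncomputable def sinKProd (κ : ℝ) (n : ℕ) (x : ℝ) : ℝ :=
  x * ∏ j ∈ Finset.range n, (1 - κ * x ^ 2 / ((j + 1) ^ 2 * π ^ 2))

lemma tendsto_sinKProd_of_sq_eq {κ : ℝ} {w : ℂ} (hw : w ≠ 0) (hκ : w ^ 2 = κ) (x : ℝ) :
    Tendsto (fun n => (sinKProd κ n x : ℂ)) atTop (𝓝 (Complex.sin (w * x) / w)) := by
  have hπ : (π : ℂ) ≠ 0 := Complex.ofReal_ne_zero.2 pi_ne_zero
  have h := (Complex.tendsto_euler_sin_prod (w * x / π)).div_const w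
  rw [mul_div_cancel₀ _ hπ] at h
  refine h.congr fun n => ?_
  simp only [sinKProd]
  push_cast
  rw [← hκ]
  field_simp

lemma exists_sin_div_eq_sinK {κ : ℝ} (hκ : κ ≠ 0) (x : ℝ) :
    ∃ w : ℂ, w ≠ 0 ∧ w ^ 2 = κ ∧ Complex.sin (w * x) / w = sinK κ x := by
  rcases hκ.lt_or_gt with hneg | hpos
  · have hs : 0 < √(-κ) := sqrt_pos.2 (neg_pos.2 hneg)
    refine ⟨√(-κ) * Complex.I, by simp [hs.ne'], ?_, ?_⟩
    · rw [mul_pow, Complex.I_sq, ← Complex.ofReal_pow, sq_sqrt (neg_nonneg.2 hneg.le)]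
      push_cast
      ring
    · rw [sinK, if_pos hneg, mul_right_comm, Complex.sin_mul_I]
      push_cast
      field_simp
  · have hs : 0 < √κ := sqrt_pos.2 hpos
    refine ⟨√κ, by exact_mod_cast hs.ne', by exact_mod_cast sq_sqrt hpos.le, ?_⟩
    rw [sinK, if_neg hpos.not_gt, if_neg hpos.ne']
    push_cast
    rfl

lemma tendsto_sinKProd (κ x : ℝ) : Tendsto (fun n => sinKProd κ n x) atTop (𝓝 (sinK κ x)) := by
  rcases eq_or_ne κ 0 with rfl | hκ
  · simp [sinKProd, sinK]
  · obtain ⟨w, hw, hwκ, hsin⟩ := exists_sin_div_eq_sinK hκ x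
    rw [← tendsto_ofReal_iff, ← hsin]
    exact tendsto_sinKProd_of_sq_eq hw hwκ x

lemma mul_lt_of_nonneg_of_le_one_of_lt {c a b : ℝ} (hc0 : 0 ≤ c) (hc1 : c ≤ 1) (hb : 0 < b)
    (h : a < b) : c * a < b := by
  rcases le_total 0 a with ha | ha
  · exact (mul_le_of_le_one_left ha hc1).trans_lt h
  · exact (mul_nonpos_of_nonneg_of_nonpos hc0 ha).trans_lt hb

lemma div_succ_sq_mul_pi_sq_lt_one {a : ℝ} (h : a < π ^ 2) (j : ℕ) :
    a / ((j + 1) ^ 2 * π ^ 2) < 1 := by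
  have hj : (1 : ℝ) ≤ (j + 1) ^ 2 := one_le_pow₀ (by linarith [(Nat.cast_nonneg j : (0 : ℝ) ≤ j)])
  exact (div_lt_one (by positivity)).2 (h.trans_le (le_mul_of_one_le_left (by positivity) hj))

lemma sinK_nonneg {κ x : ℝ} (hx : 0 ≤ x) (h : κ * x ^ 2 < π ^ 2) : 0 ≤ sinK κ x :=
  ge_of_tendsto' (tendsto_sinKProd κ x) fun _ => mul_nonneg hx <| Finset.prod_nonneg fun j _ =>
    (sub_pos.2 (div_succ_sq_mul_pi_sq_lt_one h j)).le

lemma sinK_pos {κ θ : ℝ} (hθ : 0 < θ) (h : κ * θ ^ 2 < π ^ 2) : 0 < sinK κ θ := by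
  rcases lt_trichotomy κ 0 with hκ | rfl | hκ
  · rw [sinK, if_pos hκ]
    have hs : 0 < √(-κ) := sqrt_pos.2 (neg_pos.2 hκ)
    exact div_pos (sinh_pos_iff.2 (mul_pos hs hθ)) hs
  · simpa [sinK] using hθ
  · rw [sinK, if_neg hκ.not_gt, if_neg hκ.ne']
    have hs : 0 < √κ := sqrt_pos.2 hκ
    refine div_pos (sin_pos_of_pos_of_lt_pi (mul_pos hs hθ) ?_) hs
    refine lt_of_pow_lt_pow_left₀ 2 pi_pos.le ?_
    rwa [mul_pow, sq_sqrt hκ.le]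

/-- Equivalently, `x ↦ (σ x + 1 - σ) / x ^ σ` decreases on `(0, 1]` and increases on `[1, ∞)`. -/
lemma affine_mul_rpow_le_of_mem_uIcc {σ A B : ℝ} (hσ0 : 0 ≤ σ) (hσ1 : σ ≤ 1) (hB : 0 < B)
    (hA : A ∈ uIcc B 1) :
    (σ * A + (1 - σ)) * B ^ σ ≤ (σ * B + (1 - σ)) * A ^ σ := by
  have hA0 : 0 < A := lt_of_lt_of_le (lt_min hB one_pos) hA.1
  set r := B / A
  have hr : 0 < r := div_pos hB hA0
  have hB_eq : B ^ σ = r ^ σ * A ^ σ := by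
    rw [← mul_rpow hr.le hA0.le, div_mul_cancel₀ _ hA0.ne']
  have amgm : r ^ σ ≤ σ * r + (1 - σ) := by
    simpa using geom_mean_le_arith_mean2_weighted hσ0 (sub_nonneg.2 hσ1) hr.le zero_le_one
      (add_sub_cancel σ 1)
  -- `A` lies between `B` and `1`, so `r = B / A` lies on the same side of `1` as `A`.
  have same_side : 0 ≤ (r - r ^ σ) * (A - 1) := by
    rcases le_total B 1 with h | h
    · rw [uIcc_of_le h] at hA
      have hr1 : r ≤ 1 := (div_le_one hA0).2 hA.1
      exact mul_nonneg_of_nonpos_of_nonpos (sub_nonpos.2 (self_le_rpow_of_le_one hr.le hr1 hσ1))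
        (sub_nonpos.2 hA.2)
    · rw [uIcc_of_ge h] at hA
      have hr1 : 1 ≤ r := (one_le_div hA0).2 hA.2
      exact mul_nonneg (sub_nonneg.2 (rpow_le_self_of_one_le hr1 hσ1)) (sub_nonneg.2 hA.1)
  have hB' : B = r * A := (div_mul_cancel₀ _ hA0.ne').symm
  rw [hB_eq, hB', ← mul_assoc]
  gcongr ?_ * _
  nlinarith [mul_nonneg hσ0 same_side]

lemma one_sub_mul_mul_rpow_le {σ c y : ℝ} (hσ0 : 0 ≤ σ) (hσ1 : σ ≤ 1) (hc0 : 0 ≤ c)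
    (hc1 : c ≤ 1) (hy : y < 1) :
    (1 - σ * (c * y)) * (1 - y) ^ σ ≤ (1 - σ * y) * (1 - c * y) ^ σ := by
  have hA : 1 - c * y ∈ uIcc (1 - y) 1 := by
    rw [← segment_eq_uIcc]
    exact ⟨c, 1 - c, hc0, sub_nonneg.2 hc1, by ring, by simp only [smul_eq_mul]; ring⟩
  convert affine_mul_rpow_le_of_mem_uIcc hσ0 hσ1 (sub_pos.2 hy) hA using 2 <;> ring

lemma prod_one_sub_mul_rpow_le {ι : Type*} (s : Finset ι) {y : ι → ℝ} {σ c : ℝ} (hσ0 : 0 ≤ σ)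
    (hσ1 : σ ≤ 1) (hc0 : 0 ≤ c) (hc1 : c ≤ 1) (hy : ∀ i ∈ s, y i < 1) :
    (∏ i ∈ s, (1 - σ * (c * y i))) * (∏ i ∈ s, (1 - y i)) ^ σ ≤
      (∏ i ∈ s, (1 - σ * y i)) * (∏ i ∈ s, (1 - c * y i)) ^ σ := by
  have hpos : ∀ {d}, 0 ≤ d → d ≤ 1 → ∀ i ∈ s, 0 < 1 - d * y i := fun hd0 hd1 i hi =>
    sub_pos.2 (mul_lt_of_nonneg_of_le_one_of_lt hd0 hd1 one_pos (hy i hi))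
  rw [← Real.finsetProd_rpow _ _ fun i hi => (sub_pos.2 (hy i hi)).le,
    ← Real.finsetProd_rpow _ _ fun i hi => (hpos hc0 hc1 i hi).le,
    ← Finset.prod_mul_distrib, ← Finset.prod_mul_distrib]
  refine Finset.prod_le_prod (fun i hi => ?_) fun i hi =>
    one_sub_mul_mul_rpow_le hσ0 hσ1 hc0 hc1 (hy i hi)
  rw [← mul_assoc]
  exact mul_nonneg (hpos (mul_nonneg hσ0 hc0) (mul_le_one₀ hσ1 hc0 hc1) i hi).le
    (rpow_nonneg (sub_pos.2 (hy i hi)).le σ)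

lemma sinKProd_mul_rpow_le {σ κ t θ : ℝ} (n : ℕ) (hσ0 : 0 ≤ σ) (hσ1 : σ ≤ 1) (ht0 : 0 ≤ t)
    (ht1 : t ≤ 1) (hθ : 0 ≤ θ) (h : κ * θ ^ 2 < π ^ 2) :
    sinKProd (σ * κ) n (t * θ) * sinKProd κ n θ ^ σ ≤
      t ^ (1 - σ) * sinKProd (σ * κ) n θ * sinKProd κ n (t * θ) ^ σ := by
  set y : ℕ → ℝ := fun j => κ * θ ^ 2 / ((j + 1) ^ 2 * π ^ 2)
  have hy : ∀ j ∈ Finset.range n, y j < 1 := fun j _ => div_succ_sq_mul_pi_sq_lt_one h j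
  have ht2 : t ^ 2 ≤ 1 := pow_le_one₀ ht0 ht1
  have hprod : ∀ c u, sinKProd (c * κ) n (u * θ) =
      u * θ * ∏ j ∈ Finset.range n, (1 - c * (u ^ 2 * y j)) := fun c u => by
    simp only [sinKProd, y]
    congr 1
    exact Finset.prod_congr rfl fun j _ => by ring
  have P2 := hprod 1 1
  have P3 := hprod σ 1
  have P4 := hprod 1 t
  simp only [one_mul, one_pow] at P2 P3 P4
  rw [hprod, P2, P3, P4, mul_rpow hθ (Finset.prod_nonneg fun j hj => (sub_pos.2 (hy j hj)).le),
    mul_rpow (mul_nonneg ht0 hθ) (Finset.prod_nonneg fun j hj =>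
      (sub_pos.2 (mul_lt_of_nonneg_of_le_one_of_lt (sq_nonneg t) ht2 one_pos (hy j hj))).le),
    mul_rpow ht0 hθ]
  have htσ : t ^ (1 - σ) * t ^ σ = t := by
    rw [← rpow_add' ht0 (by simp), sub_add_cancel, rpow_one]
  calc _ = t ^ (1 - σ) * t ^ σ * θ * θ ^ σ * ((∏ j ∈ Finset.range n, (1 - σ * (t ^ 2 * y j))) *
          (∏ j ∈ Finset.range n, (1 - y j)) ^ σ) := by rw [htσ]; ring
    _ ≤ t ^ (1 - σ) * t ^ σ * θ * θ ^ σ * ((∏ j ∈ Finset.range n, (1 - σ * y j)) *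
          (∏ j ∈ Finset.range n, (1 - t ^ 2 * y j)) ^ σ) := by
      gcongr ?_ * ?_
      exact prod_one_sub_mul_rpow_le _ hσ0 hσ1 (sq_nonneg t) ht2 hy
    _ = _ := by ring

lemma sinK_mul_rpow_le {σ κ t θ : ℝ} (hσ0 : 0 ≤ σ) (hσ1 : σ ≤ 1) (ht0 : 0 ≤ t) (ht1 : t ≤ 1)
    (hθ : 0 ≤ θ) (h : κ * θ ^ 2 < π ^ 2) :
    sinK (σ * κ) (t * θ) * sinK κ θ ^ σ ≤
      t ^ (1 - σ) * sinK (σ * κ) θ * sinK κ (t * θ) ^ σ :=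
  le_of_tendsto_of_tendsto'
    ((tendsto_sinKProd _ _).mul ((tendsto_sinKProd _ _).rpow_const (Or.inr hσ0)))
    (((tendsto_sinKProd _ _).const_mul _).mul ((tendsto_sinKProd _ _).rpow_const (Or.inr hσ0)))
    fun n => sinKProd_mul_rpow_le n hσ0 hσ1 ht0 ht1 hθ h

/-- The distortion coefficient `σ_{K,N}^{(t)}(θ)` is `distortionCoeff (K / N) t θ`. -/
noncomputable def distortionCoeff (κ t θ : ℝ) : ℝ := sinK κ (t * θ) / sinK κ θ

theorem distortionCoeff_mul_le {σ κ t θ : ℝ} (hσ0 : 0 ≤ σ) (hσ1 : σ ≤ 1) (ht0 : 0 ≤ t)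
    (ht1 : t ≤ 1) (hθ : 0 < θ) (h : κ * θ ^ 2 < π ^ 2) :
    distortionCoeff (σ * κ) t θ ≤ t ^ (1 - σ) * distortionCoeff κ t θ ^ σ := by
  have hσκ : σ * κ * θ ^ 2 < π ^ 2 := by
    rw [mul_assoc]
    exact mul_lt_of_nonneg_of_le_one_of_lt hσ0 hσ1 (by positivity) h
  have hκtθ : κ * (t * θ) ^ 2 < π ^ 2 := by
    rw [mul_pow, mul_left_comm]
    exact mul_lt_of_nonneg_of_le_one_of_lt (sq_nonneg t) (pow_le_one₀ ht0 ht1) (by positivity) h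
  have hsin := sinK_pos hθ h
  rw [distortionCoeff, distortionCoeff, div_rpow (sinK_nonneg (mul_nonneg ht0 hθ.le) hκtθ) hsin.le,
    div_le_iff₀ (sinK_pos hθ hσκ), mul_div_assoc', div_mul_eq_mul_div,
    le_div_iff₀ (rpow_pos_of_pos hsin σ), mul_right_comm]
  exact sinK_mul_rpow_le hσ0 hσ1 ht0 ht1 hθ.le h

lemma mul_sq_lt_pi_sq {κ θ : ℝ} (hθ : 0 ≤ θ) (h : θ * √(max κ 0) < π) : κ * θ ^ 2 < π ^ 2 :=
  calc κ * θ ^ 2 ≤ max κ 0 * θ ^ 2 := by gcongr; exact le_max_left κ 0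
    _ = (θ * √(max κ 0)) ^ 2 := by rw [mul_pow, sq_sqrt (le_max_right κ 0)]; ring
    _ < π ^ 2 := pow_lt_pow_left₀ h (by positivity) two_ne_zero

/-- The modified distortion coefficient `τ_{K,N}^{(t)}(θ)` dominates the
reduced distortion coefficient `σ_{K,N}^{(t)}(θ)`. -/
theorem distortion_tau_ge_sigma (K N t θ : ℝ) (hN : 1 < N)
    (ht0 : 0 ≤ t) (ht1 : t ≤ 1) (hθ : 0 < θ)
    (hπ : θ * Real.sqrt (max K 0 / (N - 1)) < Real.pi) :
    t ^ (1 / N) *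
      (sinK (K / (N - 1)) (t * θ) / sinK (K / (N - 1)) θ) ^ (1 - 1 / N)
      ≥ sinK (K / N) (t * θ) / sinK (K / N) θ := by
  have hN1 : 0 < N - 1 := sub_pos.2 hN
  have hσ0 : 0 ≤ 1 - 1 / N := sub_nonneg.2 ((div_le_one (by linarith)).2 hN.le)
  have hσ1 : 1 - 1 / N ≤ 1 := sub_le_self _ (by positivity)
  have hκ : K / N = (1 - 1 / N) * (K / (N - 1)) := by field_simp
  rw [← max_div_div_right hN1.le, zero_div] at hπ
  have := distortionCoeff_mul_le hσ0 hσ1 ht0 ht1 hθ (mul_sq_lt_pi_sq hθ.le hπ)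
  rwa [← hκ, sub_sub_cancel] at this
end

section
/- Let κ ∈ ℝ and a < b be reals. Let u : [a,b] → ℝ be lower semicontinuous on [a,b] and continuous on (a,b). Suppose there exists a twice differentiable function F : (a,b) → ℝ with F''(x) = −κ·u(x) for all x ∈ (a,b) such that u − F is concave on (a,b). Then u satisfies the κ-concavity inequality on [a,b]: for all x, y ∈ [a,b] with 0 < y − x (and additionally (y−x)·√κ < π if κ > 0) and all t ∈ [0,1], u((1−t)x + t y) ≥ (sin_κ((1−t)(y−x))/sin_κ(y−x))·u(x) + (sin_κ(t(y−x))/sin_κ(y−x))·u(y). -/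
/-!
Between two interior points `x < y` let `ψ` be the solution of `ψ'' + κ ψ = 0` with the boundary
values of `u`. Then `w = u - ψ = (u - F) + (F - ψ)` is a concave function plus a function `h` with
`h'' = -κ w`, a weak form of `w'' + κ w ≤ 0`, and `w` vanishes at `x` and `y`. A minimum principle
gives `w ≥ 0`: for `κ ≤ 0` the sum is concave on any interval where `w < 0`, and for `κ > 0`
subtracting from `w` the multiple `m η` of the positive solution `η = cos_κ (· - (x + y) / 2)`
that makes it touch zero leaves a function of the same kind that is nonnegative, hence concave.
Lower semicontinuity carries the inequality to the endpoints of `[a, b]`.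
-/

open Real Set

/-- `u` satisfies the κ-concavity inequality (`u'' + κ u ≤ 0`) on the set `s`. -/
def KConcIneqOn (κ : ℝ) (u : ℝ → ℝ) (s : Set ℝ) : Prop :=
  ∀ x ∈ s, ∀ y ∈ s, 0 < y - x → (0 < κ → (y - x) * Real.sqrt κ < Real.pi) →
    ∀ t ∈ Set.Icc (0:ℝ) 1,
      u ((1 - t) * x + t * y) ≥
        (sinK κ ((1 - t) * (y - x)) / sinK κ (y - x)) * u x +
        (sinK κ (t * (y - x)) / sinK κ (y - x)) * u y

open Filter Topology

noncomputable def cosK (κ x : ℝ) : ℝ :=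
  if κ < 0 then cosh (√(-κ) * x)
  else if κ = 0 then 1
  else cos (√κ * x)

lemma sinK_zero (κ : ℝ) : sinK κ 0 = 0 := by
  unfold sinK
  split_ifs <;> simp

lemma sinK_pos_s1 {κ d : ℝ} (hd : 0 < d) (hπ : 0 < κ → d * √κ < π) : 0 < sinK κ d := by
  unfold sinK
  split_ifs with hneg hzero
  · have hs : 0 < √(-κ) := sqrt_pos.2 (neg_pos.2 hneg)
    exact div_pos (sinh_pos_iff.2 (by positivity)) hs
  · exact hd
  · have hκ : 0 < κ := lt_of_le_of_ne (not_lt.1 hneg) (Ne.symm hzero)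
    have hs : 0 < √κ := sqrt_pos.2 hκ
    refine div_pos (sin_pos_of_pos_of_lt_pi (by positivity) ?_) hs
    linarith [hπ hκ, mul_comm d √κ]

lemma cosK_pos {κ t : ℝ} (hκ : 0 < κ) (hπ : |t| * √κ < π / 2) : 0 < cosK κ t := by
  rw [cosK, if_neg hκ.not_gt, if_neg hκ.ne']
  have hs : 0 < √κ := sqrt_pos.2 hκ
  apply cos_pos_of_mem_Ioo
  constructor <;> nlinarith [neg_abs_le t, le_abs_self t]

lemma hasDerivAt_sinK (κ t : ℝ) : HasDerivAt (sinK κ) (cosK κ t) t := by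
  unfold sinK cosK
  split_ifs with hneg hzero
  · have hs : 0 < √(-κ) := sqrt_pos.2 (neg_pos.2 hneg)
    simpa [mul_div_assoc, div_self hs.ne'] using
      (((hasDerivAt_id' t).const_mul √(-κ)).sinh).div_const √(-κ)
  · exact hasDerivAt_id' t
  · have hs : 0 < √κ := sqrt_pos.2 (lt_of_le_of_ne (not_lt.1 hneg) (Ne.symm hzero))
    simpa [mul_div_assoc, div_self hs.ne'] using
      (((hasDerivAt_id' t).const_mul √κ).sin).div_const √κ

lemma hasDerivAt_cosK (κ t : ℝ) : HasDerivAt (cosK κ) (-κ * sinK κ t) t := by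
  unfold sinK cosK
  split_ifs with hneg hzero
  · have hs : 0 < √(-κ) := sqrt_pos.2 (neg_pos.2 hneg)
    convert ((hasDerivAt_id' t).const_mul √(-κ)).cosh using 1
    field_simp
    rw [sq_sqrt (neg_nonneg.2 hneg.le)]
    simp
  · simpa [hzero] using hasDerivAt_const t (1 : ℝ)
  · have hκ : 0 < κ := lt_of_le_of_ne (not_lt.1 hneg) (Ne.symm hzero)
    have hs : 0 < √κ := sqrt_pos.2 hκ
    convert ((hasDerivAt_id' t).const_mul √κ).cos using 1
    field_simp
    rw [sq_sqrt hκ.le]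

@[fun_prop]
lemma continuous_sinK (κ : ℝ) : Continuous (sinK κ) :=
  continuous_iff_continuousAt.2 fun t => (hasDerivAt_sinK κ t).continuousAt

lemma mul_sqrt_lt_pi_of_le {κ d D : ℝ} (h : d ≤ D) (hD : 0 < κ → D * √κ < π) :
    0 < κ → d * √κ < π :=
  fun hκ => (mul_le_mul_of_nonneg_right h (sqrt_nonneg κ)).trans_lt (hD hκ)

section MinimumPrinciple

variable {κ x y : ℝ} {g h h' : ℝ → ℝ}

lemma concaveOn_Icc_add_of_mul_nonneg (hg : ConcaveOn ℝ (Icc x y) g)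
    (hh : ∀ s ∈ Icc x y, HasDerivAt h (h' s) s)
    (hh' : ∀ s ∈ Ioo x y, HasDerivAt h' (-κ * (g s + h s)) s)
    (hsign : ∀ s ∈ Ioo x y, 0 ≤ κ * (g s + h s)) :
    ConcaveOn ℝ (Icc x y) (fun s => g s + h s) := by
  refine hg.add (concaveOn_of_hasDerivWithinAt2_nonpos (convex_Icc x y) (f' := h')
    (f'' := fun s => -κ * (g s + h s)) (fun s hs => (hh s hs).continuousAt.continuousWithinAt)
    ?_ ?_ ?_) <;> rw [interior_Icc] <;> intro s hs
  · exact (hh s (Ioo_subset_Icc_self hs)).hasDerivWithinAt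
  · exact (hh' s hs).hasDerivWithinAt
  · linarith [hsign s hs]

variable (hg : ConcaveOn ℝ (Icc x y) g) (hgc : ContinuousOn g (Icc x y))
    (hh : ∀ s ∈ Icc x y, HasDerivAt h (h' s) s)
    (hh' : ∀ s ∈ Ioo x y, HasDerivAt h' (-κ * (g s + h s)) s)
    (hx : 0 ≤ g x + h x) (hy : 0 ≤ g y + h y)
include hg hgc hh hh' hx hy

lemma minimum_principle_of_nonpos (hκ : κ ≤ 0) : ∀ s ∈ Icc x y, 0 ≤ g s + h s := by
  by_contra! ⟨z, hz, hwz⟩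
  have hwc : ContinuousOn (fun s => g s + h s) (Icc x y) :=
    hgc.add fun s hs => (hh s hs).continuousAt.continuousWithinAt
  -- `p` and `q` are the last and first points around `z` where `g + h` is nonnegative.
  obtain ⟨p, ⟨hp, hwp⟩, hpmax⟩ := (isCompact_Icc.of_isClosed_subset
    ((hwc.mono (Icc_subset_Icc_right hz.2)).preimage_isClosed_of_isClosed isClosed_Icc
      isClosed_Ici) inter_subset_left).exists_isGreatest ⟨x, left_mem_Icc.2 hz.1, hx⟩
  obtain ⟨q, ⟨hq, hwq⟩, hqmin⟩ := (isCompact_Icc.of_isClosed_subset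
    ((hwc.mono (Icc_subset_Icc_left hz.1)).preimage_isClosed_of_isClosed isClosed_Icc
      isClosed_Ici) inter_subset_left).exists_isLeast ⟨y, right_mem_Icc.2 hz.2, hy⟩
  have hneg : ∀ s ∈ Ioo p q, g s + h s < 0 := by
    intro s hs
    by_contra! hws
    rcases le_total s z with hsz | hzs
    · exact hs.1.not_ge (hpmax ⟨⟨hp.1.trans hs.1.le, hsz⟩, hws⟩)
    · exact hs.2.not_ge (hqmin ⟨⟨hzs, hs.2.le.trans hq.2⟩, hws⟩)
  have hsub : Icc p q ⊆ Icc x y := Icc_subset_Icc hp.1 hq.2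
  have hconc := concaveOn_Icc_add_of_mul_nonneg (hg.subset hsub (convex_Icc p q))
    (fun s hs => hh s (hsub hs)) (fun s hs => hh' s (Ioo_subset_Ioo hp.1 hq.2 hs))
    fun s hs => mul_nonneg_of_nonpos_of_nonpos hκ (hneg s hs).le
  have := hconc.min_le_of_mem_Icc (left_mem_Icc.2 (hp.2.trans hq.1))
    (right_mem_Icc.2 (hp.2.trans hq.1)) ⟨hp.2, hq.1⟩
  exact (le_min hwp hwq).trans this |>.not_gt hwz

lemma minimum_principle_of_nonneg (hκ : 0 ≤ κ) {η η' : ℝ → ℝ}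
    (hη : ∀ s ∈ Icc x y, HasDerivAt η (η' s) s)
    (hη' : ∀ s ∈ Ioo x y, HasDerivAt η' (-κ * η s) s)
    (hηpos : ∀ s ∈ Icc x y, 0 < η s) : ∀ s ∈ Icc x y, 0 ≤ g s + h s := by
  by_contra! ⟨z₀, hz₀, hwz₀⟩
  have hratio : ContinuousOn (fun s => (g s + h s) / η s) (Icc x y) :=
    (hgc.add fun s hs => (hh s hs).continuousAt.continuousWithinAt).div
      (fun s hs => (hη s hs).continuousAt.continuousWithinAt) fun s hs => (hηpos s hs).ne'
  obtain ⟨z, hz, hmin⟩ := isCompact_Icc.exists_isMinOn ⟨z₀, hz₀⟩ hratio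
  set m := (g z + h z) / η z
  have hm : m < 0 := (hmin hz₀).trans_lt (div_neg_of_neg_of_pos hwz₀ (hηpos z₀ hz₀))
  -- Lowering `g + h` by the multiple `m η` makes it touch zero from above at `z`.
  have hW : ∀ s ∈ Icc x y, 0 ≤ g s + (h s - m * η s) := fun s hs => by
    linarith [(le_div_iff₀ (hηpos s hs)).1 (hmin hs)]
  have hWz : g z + (h z - m * η z) = 0 := by
    rw [div_mul_cancel₀ _ (hηpos z hz).ne']
    ring
  have hconc := concaveOn_Icc_add_of_mul_nonneg hg (h := fun s => h s - m * η s)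
    (fun s hs => (hh s hs).sub ((hη s hs).const_mul m))
    (fun s hs => ((hh' s hs).sub ((hη' s hs).const_mul m)).congr_deriv (by ring))
    fun s hs => mul_nonneg hκ (hW s (Ioo_subset_Icc_self hs))
  have hxy : x ≤ y := hz.1.trans hz.2
  have := hconc.min_le_of_mem_Icc (left_mem_Icc.2 hxy) (right_mem_Icc.2 hxy) hz
  rw [hWz] at this
  have hWx : 0 < g x + (h x - m * η x) := by nlinarith [hηpos x (left_mem_Icc.2 hxy)]
  have hWy : 0 < g y + (h y - m * η y) := by nlinarith [hηpos y (right_mem_Icc.2 hxy)]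
  exact (lt_min hWx hWy).not_ge this

end MinimumPrinciple

theorem minimum_principle {κ x y : ℝ} {g h h' : ℝ → ℝ} (hlen : 0 < κ → (y - x) * √κ < π)
    (hg : ConcaveOn ℝ (Icc x y) g) (hgc : ContinuousOn g (Icc x y))
    (hh : ∀ s ∈ Icc x y, HasDerivAt h (h' s) s)
    (hh' : ∀ s ∈ Ioo x y, HasDerivAt h' (-κ * (g s + h s)) s)
    (hx : 0 ≤ g x + h x) (hy : 0 ≤ g y + h y) : ∀ s ∈ Icc x y, 0 ≤ g s + h s := by
  rcases le_or_gt κ 0 with hκ | hκ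
  · exact minimum_principle_of_nonpos hg hgc hh hh' hx hy hκ
  · set c := (x + y) / 2 with hc
    have hηpos : ∀ s ∈ Icc x y, 0 < cosK κ (s - c) := fun s hs => by
      have hdist : |s - c| ≤ (y - x) / 2 := abs_le.2 ⟨by linarith [hs.1], by linarith [hs.2]⟩
      exact cosK_pos hκ (by nlinarith [hlen hκ, sqrt_nonneg κ])
    exact minimum_principle_of_nonneg hg hgc hh hh' hx hy hκ.le
      (fun s _ => (hasDerivAt_cosK κ _).comp_sub_const s c)
      (fun s _ => ((hasDerivAt_sinK κ _).comp_sub_const s c).const_mul (-κ)) hηpos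

/-- The solution of `ψ'' + κ ψ = 0` with `ψ x = p` and `ψ y = q`. -/
noncomputable def sinKInterp (κ x y p q s : ℝ) : ℝ :=
  sinK κ (y - s) / sinK κ (y - x) * p + sinK κ (s - x) / sinK κ (y - x) * q

section sinKInterp

variable {κ x y p q : ℝ}

lemma sinKInterp_left (h : sinK κ (y - x) ≠ 0) : sinKInterp κ x y p q x = p := by
  simp [sinKInterp, sinK_zero, div_self h]

lemma sinKInterp_right (h : sinK κ (y - x) ≠ 0) : sinKInterp κ x y p q y = q := by
  simp [sinKInterp, sinK_zero, div_self h]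

lemma exists_hasDerivAt_sinKInterp (κ x y p q : ℝ) : ∃ ψ' : ℝ → ℝ,
    (∀ s, HasDerivAt (sinKInterp κ x y p q) (ψ' s) s) ∧
      ∀ s, HasDerivAt ψ' (-κ * sinKInterp κ x y p q s) s := by
  refine ⟨fun s => -cosK κ (y - s) / sinK κ (y - x) * p + cosK κ (s - x) / sinK κ (y - x) * q,
    fun s => ?_, fun s => ?_⟩
  · exact ((((hasDerivAt_sinK κ _).comp_const_sub y s).div_const _).mul_const p).add
      ((((hasDerivAt_sinK κ _).comp_sub_const s x).div_const _).mul_const q)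
  · refine (((((hasDerivAt_cosK κ _).comp_const_sub y s).neg.div_const _).mul_const p).add
      ((((hasDerivAt_cosK κ _).comp_sub_const s x).div_const _).mul_const q)).congr_deriv ?_
    unfold sinKInterp
    ring

lemma sinKInterp_mono {z p' q' : ℝ} (hz : z ∈ Ioo x y) (hlen : 0 < κ → (y - x) * √κ < π)
    (hp : p ≤ p') (hq : q ≤ q') : sinKInterp κ x y p q z ≤ sinKInterp κ x y p' q' z := by
  have hD := sinK_pos_s1 (sub_pos.2 (hz.1.trans hz.2)) hlen
  have hA := sinK_pos_s1 (sub_pos.2 hz.2) (mul_sqrt_lt_pi_of_le (by linarith [hz.1]) hlen)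
  have hB := sinK_pos_s1 (sub_pos.2 hz.1) (mul_sqrt_lt_pi_of_le (by linarith [hz.2]) hlen)
  unfold sinKInterp
  gcongr

end sinKInterp

theorem sinKInterp_le_of_concaveOn_sub {κ x y : ℝ} {u F F' : ℝ → ℝ} (hxy : x < y)
    (hlen : 0 < κ → (y - x) * √κ < π) (hu : ContinuousOn u (Icc x y))
    (hF : ∀ s ∈ Icc x y, HasDerivAt F (F' s) s)
    (hF' : ∀ s ∈ Ioo x y, HasDerivAt F' (-κ * u s) s)
    (hconc : ConcaveOn ℝ (Icc x y) (fun s => u s - F s)) :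
    ∀ s ∈ Icc x y, sinKInterp κ x y (u x) (u y) s ≤ u s := by
  have hD := (sinK_pos_s1 (sub_pos.2 hxy) hlen).ne'
  obtain ⟨ψ', hψ, hψ'⟩ := exists_hasDerivAt_sinKInterp κ x y (u x) (u y)
  intro s hs
  have := minimum_principle hlen hconc (h := fun s => F s - sinKInterp κ x y (u x) (u y) s)
    (hu.sub fun s hs => (hF s hs).continuousAt.continuousWithinAt)
    (fun s hs => (hF s hs).sub (hψ s))
    (fun s hs => ((hF' s hs).sub (hψ' s)).congr_deriv (by ring))
    (by simp [sinKInterp_left hD]) (by simp [sinKInterp_right hD]) s hs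
  linarith

theorem sinKInterp_le_of_lowerSemicontinuousWithinAt {κ x y z : ℝ} {u : ℝ → ℝ}
    (hz : z ∈ Ioo x y) (hlen : 0 < κ → (y - x) * √κ < π)
    (hux : LowerSemicontinuousWithinAt u (Ioo x z) x)
    (huy : LowerSemicontinuousWithinAt u (Ioo z y) y)
    (hinterior : ∀ x' ∈ Ioo x z, ∀ y' ∈ Ioo z y, sinKInterp κ x' y' (u x') (u y') z ≤ u z) :
    sinKInterp κ x y (u x) (u y) z ≤ u z := by
  have hD := (sinK_pos_s1 (sub_pos.2 (hz.1.trans hz.2)) hlen).ne'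
  have := left_nhdsWithin_Ioo_neBot hz.1
  have := right_nhdsWithin_Ioo_neBot hz.2
  have hbelow : ∀ c₁ < u x, ∀ c₂ < u y, sinKInterp κ x y c₁ c₂ z ≤ u z := by
    intro c₁ hc₁ c₂ hc₂
    have hcont : ContinuousAt (fun e : ℝ × ℝ => sinKInterp κ e.1 e.2 c₁ c₂ z) (x, y) := by
      unfold sinKInterp
      fun_prop (disch := exact hD)
    refine le_of_tendsto (hcont.tendsto.mono_left ((Filter.prod_mono nhdsWithin_le_nhds
      nhdsWithin_le_nhds).trans_eq nhds_prod_eq.symm : 𝓝[Ioo x z] x ×ˢ 𝓝[Ioo z y] y ≤ _)) ?_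
    filter_upwards [(hux c₁ hc₁).prod_mk (huy c₂ hc₂),
      prod_mem_prod self_mem_nhdsWithin self_mem_nhdsWithin]
      with ⟨x', y'⟩ ⟨hx', hy'⟩ ⟨hx'm, hy'm⟩
    exact (sinKInterp_mono ⟨hx'm.2, hy'm.1⟩ (mul_sqrt_lt_pi_of_le
      (by linarith [hx'm.1, hy'm.2]) hlen) hx'.le hy'.le).trans (hinterior x' hx'm y' hy'm)
  have hlim : Tendsto (fun δ => sinKInterp κ x y (u x - δ) (u y - δ) z) (𝓝[>] 0)
      (𝓝 (sinKInterp κ x y (u x) (u y) z)) := by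
    have : Continuous fun δ => sinKInterp κ x y (u x - δ) (u y - δ) z := by
      unfold sinKInterp
      fun_prop
    simpa using (this.tendsto 0).mono_left nhdsWithin_le_nhds
  refine le_of_tendsto hlim ?_
  filter_upwards [self_mem_nhdsWithin] with δ hδ
  exact hbelow _ (sub_lt_self _ hδ) _ (sub_lt_self _ hδ)

lemma KConcIneqOn.of_sinKInterp_le {κ : ℝ} {u : ℝ → ℝ} {S : Set ℝ}
    (h : ∀ x ∈ S, ∀ y ∈ S, x < y → (0 < κ → (y - x) * √κ < π) →
      ∀ z ∈ Ioo x y, sinKInterp κ x y (u x) (u y) z ≤ u z) :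
    KConcIneqOn κ u S := by
  intro x hx y hy hxy hlen t ht
  have hD := (sinK_pos_s1 hxy hlen).ne'
  rcases ht.1.eq_or_lt with rfl | ht0
  · simp [sinK_zero, div_self hD]
  rcases ht.2.eq_or_lt with rfl | ht1
  · simp [sinK_zero, div_self hD]
  have hz : (1 - t) * x + t * y ∈ Ioo x y := ⟨by nlinarith, by nlinarith⟩
  have h₁ : (1 - t) * (y - x) = y - ((1 - t) * x + t * y) := by ring
  have h₂ : t * (y - x) = (1 - t) * x + t * y - x := by ring
  rw [h₁, h₂]
  exact h x hx y hy (sub_pos.1 hxy) hlen _ hz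

theorem kConcIneq_of_concave_sub_general (κ a b : ℝ) (u F F' : ℝ → ℝ)
    (hlsc : LowerSemicontinuousOn u (Set.Icc a b))
    (hcont : ContinuousOn u (Set.Ioo a b))
    (hF : ∀ x ∈ Set.Ioo a b, HasDerivAt F (F' x) x)
    (hF' : ∀ x ∈ Set.Ioo a b, HasDerivAt F' (-κ * u x) x)
    (hconc : ConcaveOn ℝ (Set.Ioo a b) (fun x => u x - F x)) :
    KConcIneqOn κ u (Set.Icc a b) := by
  refine KConcIneqOn.of_sinKInterp_le fun x hx y hy _ hlen z hz => ?_
  refine sinKInterp_le_of_lowerSemicontinuousWithinAt hz hlen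
    ((hlsc x hx).mono fun s hs => ⟨hx.1.trans hs.1.le, hs.2.le.trans (hz.2.le.trans hy.2)⟩)
    ((hlsc y hy).mono fun s hs => ⟨hx.1.trans (hz.1.le.trans hs.1.le), hs.2.le.trans hy.2⟩)
    fun x' hx' y' hy' => ?_
  have hsub : Icc x' y' ⊆ Ioo a b := Icc_subset_Ioo (hx.1.trans_lt hx'.1) (hy'.2.trans_le hy.2)
  exact sinKInterp_le_of_concaveOn_sub (hx'.2.trans hy'.1)
    (mul_sqrt_lt_pi_of_le (by linarith [hx'.1, hy'.2]) hlen) (hcont.mono hsub)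
    (fun s hs => hF s (hsub hs)) (fun s hs => hF' s (hsub (Ioo_subset_Icc_self hs)))
    (hconc.subset hsub (convex_Icc x' y')) z ⟨hx'.2.le, hy'.1.le⟩

/-- If `u` is lower semicontinuous on `[a,b]`, continuous on `(a,b)`, and there is a
twice differentiable `F` on `(a,b)` with `F'' = -κ u` such that `u - F` is concave on
`(a,b)`, then `u` satisfies the κ-concavity inequality on `[a,b]`. -/
theorem kConcIneq_of_concave_sub (κ a b : ℝ) (hab : a < b) (u F F' : ℝ → ℝ)
    (hlsc : LowerSemicontinuousOn u (Set.Icc a b))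
    (hcont : ContinuousOn u (Set.Ioo a b))
    (hF : ∀ x ∈ Set.Ioo a b, HasDerivAt F (F' x) x)
    (hF' : ∀ x ∈ Set.Ioo a b, HasDerivAt F' (-κ * u x) x)
    (hconc : ConcaveOn ℝ (Set.Ioo a b) (fun x => u x - F x)) :
    KConcIneqOn κ u (Set.Icc a b) :=
  kConcIneq_of_concave_sub_general κ a b u F F' hlsc hcont hF hF' hconc
end

section
/- Let v : [0,π] → ℝ be continuous and satisfy the 1-concavity inequality: for all x, y ∈ [0,π] with 0 < y − x < π and all t ∈ [0,1], v((1−t)x + t y) ≥ (sin((1−t)(y−x))·v(x) + sin(t(y−x))·v(y)) / sin(y−x). If v(0) = 0, v(π) = 0 and v(π/2) ≤ 0, then v(s) ≤ 0 for all s ∈ [0,π]. -/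
open Real Set

/-- A continuous function on `[0,π]` satisfying the 1-concavity inequality
(`v'' + v ≤ 0`) which vanishes at `0` and `π` and is nonpositive at `π/2`
is nonpositive everywhere on `[0,π]`. -/
theorem nonpos_of_oneConcave (v : ℝ → ℝ)
    (hcont : ContinuousOn v (Set.Icc 0 Real.pi))
    (hconc : ∀ x ∈ Set.Icc 0 Real.pi, ∀ y ∈ Set.Icc 0 Real.pi,
      0 < y - x → y - x < Real.pi → ∀ t ∈ Set.Icc (0:ℝ) 1,
        v ((1 - t) * x + t * y) ≥
          (Real.sin ((1 - t) * (y - x)) * v x + Real.sin (t * (y - x)) * v y) /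
            Real.sin (y - x))
    (h0 : v 0 = 0) (hπ : v Real.pi = 0) (hmid : v (Real.pi / 2) ≤ 0) :
    ∀ s ∈ Set.Icc 0 Real.pi, v s ≤ 0 := by
  intro s hs
  obtain ⟨hs0, hsπ⟩ := hs
  rcases eq_or_lt_of_le hs0 with h0s | h0s
  · rw [← h0s, h0]
  rcases eq_or_lt_of_le hsπ with hsπ' | hsπ'
  · rw [hsπ', hπ]
  have hsin : 0 < Real.sin s := Real.sin_pos_of_pos_of_lt_pi h0s hsπ'
  rcases le_or_gt s (Real.pi / 2) with hhalf | hhalf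
  · -- use x = s, y = π, interior point π/2
    set t : ℝ := (Real.pi / 2 - s) / (Real.pi - s) with ht
    have hden : (0:ℝ) < Real.pi - s := by linarith
    have ht0 : 0 ≤ t := div_nonneg (by linarith) hden.le
    have ht1 : t ≤ 1 := by
      rw [ht, div_le_one hden]; linarith [Real.pi_pos]
    have key := hconc s ⟨hs0, hsπ⟩ Real.pi ⟨Real.pi_pos.le, le_refl _⟩
      (by linarith) (by linarith) t ⟨ht0, ht1⟩
    have e1 : (1 - t) * s + t * Real.pi = Real.pi / 2 := by
      rw [ht]; field_simp; ring
    have e2 : (1 - t) * (Real.pi - s) = Real.pi / 2 := by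
      rw [ht]; field_simp; ring
    have e3 : t * (Real.pi - s) = Real.pi / 2 - s := by
      rw [ht]; field_simp
    rw [e1, e2, e3, Real.sin_pi_div_two, Real.sin_pi_sub, hπ] at key
    -- key : v (π/2) ≥ (1 * v s + sin (π/2 - s) * 0) / sin s
    rw [ge_iff_le, div_le_iff₀ hsin] at key
    nlinarith
  · -- use x = 0, y = s, interior point π/2
    set t : ℝ := Real.pi / (2 * s) with ht
    have hs2 : (0:ℝ) < 2 * s := by linarith
    have ht0 : 0 ≤ t := div_nonneg Real.pi_pos.le hs2.le
    have ht1 : t ≤ 1 := by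
      rw [ht, div_le_one hs2]; linarith
    have key := hconc 0 ⟨le_refl _, Real.pi_pos.le⟩ s ⟨hs0, hsπ⟩
      (by linarith) (by linarith) t ⟨ht0, ht1⟩
    have e1 : (1 - t) * 0 + t * s = Real.pi / 2 := by
      rw [ht]; field_simp; ring
    have e2 : t * (s - 0) = Real.pi / 2 := by
      rw [ht]; field_simp; ring
    have hne : s - 0 = s := by ring
    rw [e1, e2, hne, Real.sin_pi_div_two, h0] at key
    -- key : v (π/2) ≥ (sin ((1-t)*s) * 0 + 1 * v s) / sin s
    rw [ge_iff_le, div_le_iff₀ hsin] at key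
    nlinarith
end

section
/- Let v : [0,π] → ℝ be continuous and satisfy the 1-concavity inequality: for all x, y ∈ [0,π] with 0 < y − x < π and all t ∈ [0,1], v((1−t)x + t y) ≥ (sin((1−t)(y−x))·v(x) + sin(t(y−x))·v(y)) / sin(y−x). Define f on the closed upper half-plane H = {(x,y) ∈ ℝ² : y ≥ 0} by f(r·cos s, r·sin s) = r·v(s) for r ≥ 0 and s ∈ [0,π] (equivalently, f(p) = ‖p‖·v(θ(p)) for p ≠ 0, where θ(p) ∈ [0,π] is the angle of p with the positive x-axis, and f(0,0) = 0). Then f is concave on H. -/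
/-!
Write points of the upper half-plane as `polar r s = (r cos s, r sin s)`, `r ≥ 0`, `s ∈ [0, π]`.
A positively homogeneous function on a convex cone is concave as soon as it is superadditive,
and superadditivity of `f` is the 1-concavity of `v` read off along a triangle: if
`polar r α + polar ρ β = polar R γ` with `α < β`, the law of sines gives
`R sin (β - γ) = r sin (β - α)` and `R sin (γ - α) = ρ sin (β - α)`, so `γ` lies between `α` and `β`
and the 1-concavity inequality at `γ`, multiplied by `R`, is exactly `r v α + ρ v β ≤ R v γ`.
The antipodal case `α = 0`, `β = π` needs `v 0 + v π ≤ 0`, which follows from two instances of the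
1-concavity inequality, on `[0, 3π/4]` and on `[π/2, π]`.
-/

open Real Set

theorem concaveOn_of_superadditive_of_homogeneous {𝕜 E β : Type*} [Semiring 𝕜] [PartialOrder 𝕜]
    [IsOrderedRing 𝕜] [AddCommMonoid E] [Module 𝕜 E] [AddCommMonoid β] [PartialOrder β]
    [IsOrderedAddMonoid β] [SMul 𝕜 β] {s : Set E} {f : E → β} (hs : Convex 𝕜 s)
    (hs_smul : ∀ c : 𝕜, 0 ≤ c → ∀ x ∈ s, c • x ∈ s)
    (hf_add : ∀ x ∈ s, ∀ y ∈ s, f x + f y ≤ f (x + y))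
    (hf_smul : ∀ c : 𝕜, 0 ≤ c → ∀ x ∈ s, f (c • x) = c • f x) :
    ConcaveOn 𝕜 s f := by
  refine ⟨hs, fun x hx y hy a b ha hb _ => ?_⟩
  rw [← hf_smul a ha x hx, ← hf_smul b hb y hy]
  exact hf_add _ (hs_smul a ha x hx) _ (hs_smul b hb y hy)

noncomputable def polar (r s : ℝ) : ℝ × ℝ := (r * cos s, r * sin s)

theorem exists_polar_of_nonneg_snd {p : ℝ × ℝ} (hp : 0 ≤ p.2) :
    ∃ r, 0 ≤ r ∧ ∃ s ∈ Icc 0 π, p = polar r s := by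
  set z : ℂ := ⟨p.1, p.2⟩
  refine ⟨‖z‖, norm_nonneg z, z.arg, ⟨Complex.arg_nonneg_iff.2 hp, Complex.arg_le_pi z⟩, ?_⟩
  rw [polar, Complex.norm_mul_cos_arg, Complex.norm_mul_sin_arg]

theorem smul_polar (c r s : ℝ) : c • polar r s = polar (c * r) s := by
  ext <;> simp [polar, mul_assoc]

theorem polar_add_polar_same (r ρ s : ℝ) : polar r s + polar ρ s = polar (r + ρ) s := by
  ext <;> simp [polar, add_mul]

theorem polar_zero_add_polar_pi (r ρ : ℝ) : polar r 0 + polar ρ π = (r - ρ, 0) := by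
  ext <;> simp [polar, sub_eq_add_neg]

theorem mul_sin_sub_eq_of_polar_add_polar {r ρ R α β γ : ℝ}
    (h : polar r α + polar ρ β = polar R γ) :
    R * sin (β - γ) = r * sin (β - α) ∧ R * sin (γ - α) = ρ * sin (β - α) := by
  simp only [polar, Prod.ext_iff, Prod.fst_add, Prod.snd_add] at h
  obtain ⟨h₁, h₂⟩ := h
  simp only [sin_sub]
  constructor
  · linear_combination cos β * h₂ - sin β * h₁
  · linear_combination sin α * h₁ - cos α * h₂

theorem pos_of_sin_pos {x : ℝ} (hx : -π ≤ x) (hsin : 0 < sin x) : 0 < x := by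
  by_contra! h
  exact (sin_nonpos_of_nonpos_of_neg_pi_le h hx).not_gt hsin

def OneConcave (v : ℝ → ℝ) : Prop :=
  ∀ x ∈ Icc 0 π, ∀ y ∈ Icc 0 π, 0 < y - x → y - x < π → ∀ t ∈ Icc (0:ℝ) 1,
    v ((1 - t) * x + t * y) ≥
      (sin ((1 - t) * (y - x)) * v x + sin (t * (y - x)) * v y) / sin (y - x)

def IsPolarExtension (v : ℝ → ℝ) (f : ℝ × ℝ → ℝ) : Prop :=
  ∀ r : ℝ, 0 ≤ r → ∀ s ∈ Icc 0 π, f (polar r s) = r * v s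

namespace OneConcave

variable {v : ℝ → ℝ}

theorem sin_mul_add_sin_mul_le (hv : OneConcave v) {α γ β : ℝ} (hα : 0 ≤ α) (hαγ : α ≤ γ)
    (hγβ : γ ≤ β) (hβ : β ≤ π) (hαβ : α < β) (hβα : β - α < π) :
    sin (β - γ) * v α + sin (γ - α) * v β ≤ sin (β - α) * v γ := by
  have hd : 0 < β - α := by linarith
  set t := (γ - α) / (β - α)
  have ht : t * (β - α) = γ - α := div_mul_cancel₀ _ hd.ne'
  have h := hv α ⟨hα, by linarith⟩ β ⟨by linarith, hβ⟩ hd hβα t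
    ⟨div_nonneg (by linarith) hd.le, div_le_one_of_le₀ (by linarith) hd.le⟩
  rw [show (1 - t) * α + t * β = γ by linear_combination ht,
    show (1 - t) * (β - α) = β - γ by linear_combination -ht, ht, ge_iff_le,
    div_le_iff₀ (sin_pos_of_pos_of_lt_pi hd hβα)] at h
  linarith

theorem apply_zero_add_apply_pi_nonpos (hv : OneConcave v) : v 0 + v π ≤ 0 := by
  have := pi_pos
  have h₁ := hv.sin_mul_add_sin_mul_le (α := 0) (γ := π / 2) (β := 3 * π / 4)
    le_rfl (by positivity) (by linarith) (by linarith) (by positivity) (by linarith)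
  have h₂ := hv.sin_mul_add_sin_mul_le (α := π / 2) (γ := 3 * π / 4) (β := π)
    (by positivity) (by linarith) (by linarith) le_rfl (by linarith) (by linarith)
  rw [show 3 * π / 4 - π / 2 = π / 4 by ring, show π / 2 - 0 = π / 2 by ring,
    show 3 * π / 4 - 0 = π - π / 4 by ring, sin_pi_sub, sin_pi_div_two] at h₁
  rw [show π - 3 * π / 4 = π / 4 by ring, show 3 * π / 4 - π / 2 = π / 4 by ring,
    show π - π / 2 = π / 2 by ring, sin_pi_div_two] at h₂
  have hs : 0 < sin (π / 4) := sin_pos_of_pos_of_lt_pi (by positivity) (by linarith)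
  exact nonpos_of_mul_nonpos_right (by linarith) hs

end OneConcave

namespace IsPolarExtension

variable {v : ℝ → ℝ} {f : ℝ × ℝ → ℝ}

theorem apply_smul (hf : IsPolarExtension v f) {c : ℝ} (hc : 0 ≤ c) {p : ℝ × ℝ} (hp : 0 ≤ p.2) :
    f (c • p) = c • f p := by
  obtain ⟨r, hr, s, hs, rfl⟩ := exists_polar_of_nonneg_snd hp
  rw [smul_polar, hf _ (mul_nonneg hc hr) s hs, hf r hr s hs, smul_eq_mul, mul_assoc]

theorem le_apply_polar_zero_add_polar_pi (hf : IsPolarExtension v f) (hv : OneConcave v)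
    {r ρ : ℝ} (hr : 0 ≤ r) (hρ : 0 ≤ ρ) : r * v 0 + ρ * v π ≤ f (polar r 0 + polar ρ π) := by
  have hvπ := hv.apply_zero_add_apply_pi_nonpos
  rw [polar_zero_add_polar_pi]
  rcases le_total ρ r with hρr | hrρ
  · have h := hf (r - ρ) (by linarith) 0 ⟨le_rfl, pi_pos.le⟩
    simp only [polar, cos_zero, sin_zero, mul_one, mul_zero] at h
    rw [h]
    linarith [mul_nonpos_of_nonneg_of_nonpos hρ hvπ]
  · have h := hf (ρ - r) (by linarith) π ⟨pi_pos.le, le_rfl⟩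
    simp only [polar, cos_pi, sin_pi, mul_neg, mul_one, mul_zero, neg_sub] at h
    rw [h]
    linarith [mul_nonpos_of_nonneg_of_nonpos hr hvπ]

theorem le_apply_polar_add_polar_of_lt (hf : IsPolarExtension v f) (hv : OneConcave v)
    {r ρ α β : ℝ} (hr : 0 < r) (hρ : 0 < ρ) (hα : 0 ≤ α) (hαβ : α < β) (hβ : β ≤ π)
    (hβα : β - α < π) :
    r * v α + ρ * v β ≤ f (polar r α + polar ρ β) := by
  have hsin : 0 < sin (β - α) := sin_pos_of_pos_of_lt_pi (by linarith) hβα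
  have hsnd : 0 ≤ (polar r α + polar ρ β).2 := by
    have := sin_nonneg_of_nonneg_of_le_pi hα (by linarith)
    have := sin_nonneg_of_nonneg_of_le_pi (by linarith) hβ
    simp only [polar, Prod.snd_add]
    positivity
  obtain ⟨R, hR, γ, hγ, hsum⟩ := exists_polar_of_nonneg_snd hsnd
  obtain ⟨hA, hB⟩ := mul_sin_sub_eq_of_polar_add_polar hsum
  have hβγ : 0 < sin (β - γ) := pos_of_mul_pos_right (hA ▸ mul_pos hr hsin) hR
  have hγα : 0 < sin (γ - α) := pos_of_mul_pos_right (hB ▸ mul_pos hρ hsin) hR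
  have hαγ := pos_of_sin_pos (by linarith [hγ.1]) hγα
  have hγβ := pos_of_sin_pos (by linarith [hγ.2]) hβγ
  have key := hv.sin_mul_add_sin_mul_le hα (by linarith) (by linarith) hβ hαβ hβα
  rw [hsum, hf R hR γ hγ]
  refine le_of_mul_le_mul_left ?_ hsin
  calc sin (β - α) * (r * v α + ρ * v β)
      = R * (sin (β - γ) * v α + sin (γ - α) * v β) := by
        linear_combination -v α * hA - v β * hB
    _ ≤ R * (sin (β - α) * v γ) := mul_le_mul_of_nonneg_left key hR
    _ = sin (β - α) * (R * v γ) := by ring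

theorem le_apply_polar_add_polar (hf : IsPolarExtension v f) (hv : OneConcave v)
    {r ρ α β : ℝ} (hr : 0 ≤ r) (hρ : 0 ≤ ρ) (hα : α ∈ Icc 0 π) (hβ : β ∈ Icc 0 π) (hαβ : α ≤ β) :
    r * v α + ρ * v β ≤ f (polar r α + polar ρ β) := by
  rcases hr.eq_or_lt with rfl | hr
  · rw [show polar 0 α = 0 by simp [polar], zero_add, hf ρ hρ β hβ, zero_mul, zero_add]
  rcases hρ.eq_or_lt with rfl | hρ
  · rw [show polar 0 β = 0 by simp [polar], add_zero, hf r hr.le α hα, zero_mul, add_zero]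
  rcases hαβ.eq_or_lt with rfl | hαβ
  · rw [polar_add_polar_same, hf _ (by positivity) α hα, add_mul]
  rcases (show β - α ≤ π by linarith [hα.1, hβ.2]).eq_or_lt with hπ | hπ
  · obtain ⟨rfl, rfl⟩ : α = 0 ∧ β = π := by constructor <;> linarith [hα.1, hβ.2]
    exact hf.le_apply_polar_zero_add_polar_pi hv hr.le hρ.le
  · exact hf.le_apply_polar_add_polar_of_lt hv hr hρ hα.1 hαβ hβ.2 hπ

theorem superadditive (hf : IsPolarExtension v f) (hv : OneConcave v) {p q : ℝ × ℝ}
    (hp : 0 ≤ p.2) (hq : 0 ≤ q.2) :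
    f p + f q ≤ f (p + q) := by
  obtain ⟨r, hr, α, hα, rfl⟩ := exists_polar_of_nonneg_snd hp
  obtain ⟨ρ, hρ, β, hβ, rfl⟩ := exists_polar_of_nonneg_snd hq
  rw [hf r hr α hα, hf ρ hρ β hβ]
  rcases le_total α β with hαβ | hβα
  · exact hf.le_apply_polar_add_polar hv hr hρ hα hβ hαβ
  · rw [add_comm, add_comm (polar r α)]
    exact hf.le_apply_polar_add_polar hv hρ hr hβ hα hβα

end IsPolarExtension

theorem concaveOn_homogeneous_extension_general (v : ℝ → ℝ)
    (hconc : ∀ x ∈ Set.Icc 0 Real.pi, ∀ y ∈ Set.Icc 0 Real.pi,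
      0 < y - x → y - x < Real.pi → ∀ t ∈ Set.Icc (0:ℝ) 1,
        v ((1 - t) * x + t * y) ≥
          (Real.sin ((1 - t) * (y - x)) * v x + Real.sin (t * (y - x)) * v y) /
            Real.sin (y - x))
    (f : ℝ × ℝ → ℝ)
    (hf : ∀ r : ℝ, 0 ≤ r → ∀ s ∈ Set.Icc 0 Real.pi,
      f (r * Real.cos s, r * Real.sin s) = r * v s) :
    ConcaveOn ℝ {p : ℝ × ℝ | 0 ≤ p.2} f := by
  have hv : OneConcave v := hconc
  have hf : IsPolarExtension v f := hf
  exact concaveOn_of_superadditive_of_homogeneous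
    (convex_halfSpace_ge (LinearMap.snd ℝ ℝ ℝ).isLinear 0) (fun c hc p hp => mul_nonneg hc hp)
    (fun p hp q hq => hf.superadditive hv hp hq) (fun c hc p hp => hf.apply_smul hc hp)

/-- The positively 1-homogeneous extension to the closed upper half-plane (via polar
coordinates) of a function on `[0,π]` satisfying the 1-concavity inequality
(`v'' + v ≤ 0`) is concave on the closed upper half-plane. -/
theorem concaveOn_homogeneous_extension (v : ℝ → ℝ)
    (hcont : ContinuousOn v (Set.Icc 0 Real.pi))
    (hconc : ∀ x ∈ Set.Icc 0 Real.pi, ∀ y ∈ Set.Icc 0 Real.pi,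
      0 < y - x → y - x < Real.pi → ∀ t ∈ Set.Icc (0:ℝ) 1,
        v ((1 - t) * x + t * y) ≥
          (Real.sin ((1 - t) * (y - x)) * v x + Real.sin (t * (y - x)) * v y) /
            Real.sin (y - x))
    (f : ℝ × ℝ → ℝ)
    (hf : ∀ r : ℝ, 0 ≤ r → ∀ s ∈ Set.Icc 0 Real.pi,
      f (r * Real.cos s, r * Real.sin s) = r * v s) :
    ConcaveOn ℝ {p : ℝ × ℝ | 0 ≤ p.2} f :=
  concaveOn_homogeneous_extension_general v hconc f hf
end

section
/- For every real N ≥ 1 there exists a constant c ∈ (0,1] such that for all θ > 0 with N·θ² ≤ c and all t ∈ (0,1): sin(tθ) ≤ t^{(N−1)/N} · sin(θ). Equivalently, t^N ≥ t·(sin(tθ)/sin(θ))^N = (τ_{N,N+1}^{(t)}(θ))^{N+1} for all such θ and t. -/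
open Real Set

/-- Key pointwise inequality: for `0 < x ≤ 1` with `N x² ≤ 1`,
`(N-1)·sin x ≤ N·x·cos x`. -/
lemma mcp_key (N x : ℝ) (hN : 1 ≤ N) (hx : 0 < x) (hx1 : x ≤ 1)
    (hNx : N * x ^ 2 ≤ 1) : (N - 1) * Real.sin x ≤ N * (x * Real.cos x) := by
  have h1 : Real.sin x ≤ x := Real.sin_le hx.le
  have h2 : 1 - x ^ 2 / 2 ≤ Real.cos x := Real.one_sub_sq_div_two_le_cos
  nlinarith [mul_le_mul_of_nonneg_left h1 (by linarith : (0:ℝ) ≤ N - 1),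
    mul_le_mul_of_nonneg_left h2 (by positivity : (0:ℝ) ≤ N * x),
    mul_le_mul_of_nonneg_right hNx hx.le]

/-- For every `N ≥ 1` there is a constant `c ∈ (0,1]` such that whenever
`N·θ² ≤ c` (with `θ > 0`) and `t ∈ (0,1)`, one has
`sin(tθ) ≤ t^((N-1)/N) · sin(θ)`; equivalently
`t^N ≥ t·(sin(tθ)/sin(θ))^N = (τ_{N,N+1}^{(t)}(θ))^{N+1}`. -/
theorem mcp_small_diameter (N : ℝ) (hN : 1 ≤ N) :
    ∃ c : ℝ, 0 < c ∧ c ≤ 1 ∧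
      ∀ θ : ℝ, 0 < θ → N * θ ^ 2 ≤ c → ∀ t ∈ Set.Ioo (0:ℝ) 1,
        Real.sin (t * θ) ≤ t ^ ((N - 1) / N) * Real.sin θ ∧
        t ^ N ≥ t * (Real.sin (t * θ) / Real.sin θ) ^ N := by
  have hN0 : (0:ℝ) < N := lt_of_lt_of_le one_pos hN
  refine ⟨1, one_pos, le_refl 1, ?_⟩
  intro θ hθ hθc t ht
  obtain ⟨ht0, ht1⟩ := ht
  set α : ℝ := (N - 1) / N with hα
  have hα0 : 0 ≤ α := div_nonneg (by linarith) hN0.le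
  have hθ1 : θ ≤ 1 := by nlinarith
  have hθπ : θ < Real.pi := lt_of_le_of_lt hθ1 (by linarith [Real.pi_gt_three])
  have hsinθ : 0 < Real.sin θ := Real.sin_pos_of_pos_of_lt_pi hθ hθπ
  have hsintθ : 0 < Real.sin (t * θ) := by
    apply Real.sin_pos_of_pos_of_lt_pi (by positivity)
    calc t * θ < 1 * θ := by nlinarith
    _ ≤ 1 := by linarith
    _ < Real.pi := by linarith [Real.pi_gt_three]
  -- the function H s = s^(-α) * sin (s θ) is monotone on [t, 1]
  have hD : ∀ s : ℝ, t ≤ s → s ≤ 1 →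
      HasDerivAt (fun s : ℝ => s ^ (-α) * Real.sin (s * θ))
        ((-α) * s ^ (-α - 1) * Real.sin (s * θ) + s ^ (-α) * (Real.cos (s * θ) * θ)) s := by
    intro s hs hs1
    have hs0 : 0 < s := lt_of_lt_of_le ht0 hs
    have h1 : HasDerivAt (fun s : ℝ => s ^ (-α)) ((-α) * s ^ (-α - 1)) s :=
      Real.hasDerivAt_rpow_const (Or.inl hs0.ne')
    have h2 : HasDerivAt (fun s : ℝ => Real.sin (s * θ)) (Real.cos (s * θ) * θ) s :=
      (hasDerivAt_mul_const θ).sin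
    exact h1.mul h2
  have hmono : MonotoneOn (fun s : ℝ => s ^ (-α) * Real.sin (s * θ)) (Set.Icc t 1) := by
    apply monotoneOn_of_deriv_nonneg (convex_Icc t 1)
    · exact fun s hs => ((hD s hs.1 hs.2).continuousAt).continuousWithinAt
    · intro s hs
      rw [interior_Icc] at hs
      exact ((hD s hs.1.le hs.2.le).differentiableAt).differentiableWithinAt
    · intro s hs
      rw [interior_Icc] at hs
      obtain ⟨hst, hs1⟩ := hs
      have hs0 : 0 < s := lt_trans ht0 hst
      rw [(hD s hst.le hs1.le).deriv]
      have hsq : (s * θ) ^ 2 ≤ θ ^ 2 := by nlinarith [mul_nonneg (by nlinarith : (0:ℝ) ≤ 1 - s ^ 2) (sq_nonneg θ)]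
      have hkey : (N - 1) * Real.sin (s * θ) ≤ N * (s * θ * Real.cos (s * θ)) := by
        apply mcp_key N (s * θ) hN (by positivity)
        · nlinarith [mul_nonneg (by linarith : (0:ℝ) ≤ 1 - s) hθ.le]
        · nlinarith [mul_le_mul_of_nonneg_left hsq hN0.le]
      have hsum : 0 ≤ (-α) * Real.sin (s * θ) + s * (Real.cos (s * θ) * θ) := by
        have heq : (-((N - 1) / N)) * Real.sin (s * θ) + s * (Real.cos (s * θ) * θ)
            = (N * (s * θ * Real.cos (s * θ)) - (N - 1) * Real.sin (s * θ)) / N := by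
          field_simp
          ring
        rw [hα, heq]
        exact div_nonneg (by linarith) hN0.le
      have hrw : s ^ (-α) = s ^ (-α - 1) * s := by
        rw [← Real.rpow_add_one hs0.ne' (-α - 1)]; ring_nf
      have hpow : (0:ℝ) ≤ s ^ (-α - 1) := (Real.rpow_pos_of_pos hs0 _).le
      calc (0:ℝ) ≤ s ^ (-α - 1) * ((-α) * Real.sin (s * θ) + s * (Real.cos (s * θ) * θ)) :=
            mul_nonneg hpow hsum
        _ = (-α) * s ^ (-α - 1) * Real.sin (s * θ) + s ^ (-α) * (Real.cos (s * θ) * θ) := by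
            rw [hrw]; ring
  have hH : t ^ (-α) * Real.sin (t * θ) ≤ 1 ^ (-α) * Real.sin (1 * θ) :=
    hmono ⟨le_refl t, ht1.le⟩ ⟨ht1.le, le_refl 1⟩ ht1.le
  rw [Real.one_rpow, one_mul, one_mul] at hH
  have hta : (0:ℝ) < t ^ α := Real.rpow_pos_of_pos ht0 _
  have hmain : Real.sin (t * θ) ≤ t ^ α * Real.sin θ := by
    have := mul_le_mul_of_nonneg_left hH hta.le
    rwa [← mul_assoc, ← Real.rpow_add ht0, add_neg_cancel, Real.rpow_zero, one_mul] at this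
  refine ⟨hmain, ?_⟩
  have hratio : Real.sin (t * θ) / Real.sin θ ≤ t ^ α := by
    rw [div_le_iff₀ hsinθ]; exact hmain
  have hratio0 : 0 ≤ Real.sin (t * θ) / Real.sin θ := le_of_lt (div_pos hsintθ hsinθ)
  have h5 : (Real.sin (t * θ) / Real.sin θ) ^ N ≤ (t ^ α) ^ N :=
    Real.rpow_le_rpow hratio0 hratio hN0.le
  have h6 : (t ^ α) ^ N = t ^ (N - 1) := by
    rw [← Real.rpow_mul ht0.le, hα, div_mul_cancel₀ _ hN0.ne']
  have h7 : t * t ^ (N - 1) = t ^ N := by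
    nth_rewrite 1 [← Real.rpow_one t]
    rw [← Real.rpow_add ht0]; ring_nf
  calc t * (Real.sin (t * θ) / Real.sin θ) ^ N ≤ t * (t ^ α) ^ N :=
        mul_le_mul_of_nonneg_left h5 ht0.le
    _ = t ^ N := by rw [h6, h7]
end
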